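/- arXiv:2303.00511 — 2 statements merged into one kernel-verified Lean document; each statement's English description precedes it below -/
import Mathlib

section
/- Let Y = (ℓ₂, |||·|||) be the renorming of ℓ₂ described in the context, and for n ∈ ℕ let x(n) and x*(n) be as defined there. Then for each fixed n, x(n) is strongly exposed in B_Y by x*(n): for every ε > 0 there exists δ > 0 such that every y ∈ ℓ₂ with |||y||| ≤ 1 and x*(n)(y) > 1 − δ satisfies |||x(n) − y||| < ε. Likewise, x*(n) is strongly exposed in B_{Y*} by x(n): for every ε > 0 there exists δ > 0 such that every y* in the dual unit ball of Y with y*(x(n)) > 1 − δ satisfies |||x*(n) − y*|||_{Y*} < ε. -/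
open NormedSpace Topology Filter

noncomputable section

/-- The real sequence space ℓ₂. -/
abbrev H : Type := lp (fun _ : ℕ => ℝ) 2

/-- The standard unit vector basis of ℓ₂ (`e 0` plays the role of `e₁`, and `e n` for
`n ≥ 1` the roles of `e_n`, `n ≥ 2`, of the paper). -/
def e (n : ℕ) : H := lp.single 2 n (1 : ℝ)

/-- The unit ball of the auxiliary renorming of ℓ₂: the closed convex hull of
`B_{ℓ₂} ∪ {±(e₁ + e_n) : n ≥ 2}`. -/
def ballB : Set H :=
  closure (convexHull ℝ (Metric.closedBall (0 : H) 1 ∪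
    {z : H | ∃ n : ℕ, 1 ≤ n ∧ (z = e 0 + e n ∨ z = -(e 0 + e n))}))

/-- The norm `‖·‖` whose unit ball is `ballB`, i.e. the Minkowski gauge of `ballB`. -/
def normB (x : H) : ℝ := gauge ballB x

/-- The norm `|||x||| = max (‖x‖, sup_{n ≥ 2} |x₁ − 2 x_n|)` of the renorming `Y` of ℓ₂. -/
def tripleNorm (x : H) : ℝ :=
  max (normB x) (sSup {r : ℝ | ∃ n : ℕ, 1 ≤ n ∧ r = |x 0 - 2 * x n|})

/-- The canonical pairing of ℓ₂ with itself. -/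
def pairing (f y : H) : ℝ := ∑' i : ℕ, f i * y i

/-- The dual norm of `tripleNorm`, computed on ℓ₂ via the canonical pairing. -/
def dualTripleNorm (f : H) : ℝ :=
  sSup ((fun y => pairing f y) '' {y : H | tripleNorm y ≤ 1})

/-- `x(n) = (1 − 1/n) e₁ + (1/(4n)) Σ_{i=2}^{k+1} e_i` with `k = 32n − 16`
(in 0-based indexing, the sum runs over `e i` for `1 ≤ i ≤ 32n − 16`). -/
def xx (n : ℕ) : H :=
  (1 - 1 / (n : ℝ)) • e 0 + (1 / (4 * (n : ℝ))) • ∑ i ∈ Finset.Icc 1 (32 * n - 16), e i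

/-- `x*(n) = (1 − 1/n) e₁* + (1/(4n)) Σ_{i=2}^{k+1} e_i*`, realized in ℓ₂ via the
canonical pairing; it is given by the same formula as `x(n)`. -/
def xs (n : ℕ) : H := xx n

open scoped RealInnerProductSpace

/-! ### Basic inner-product lemmas -/

lemma pairing_eq_inner (f y : H) : pairing f y = ⟪f, y⟫ := by
  rw [pairing, lp.inner_eq_tsum]
  simp [RCLike.inner_apply, mul_comm]

lemma apply_eq_inner (z : H) (m : ℕ) : z m = ⟪e m, z⟫ := by
  rw [e, lp.inner_single_left]
  simp [RCLike.inner_apply]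

lemma inner_e_e (i m : ℕ) : ⟪e m, e i⟫ = if m = i then 1 else 0 := by
  rw [← apply_eq_inner, e, lp.single_apply]
  split_ifs with h
  · subst h; simp
  · simp [Pi.single_apply, h]

lemma inner_xx (n : ℕ) (z : H) :
    ⟪xx n, z⟫ = (1 - 1 / (n : ℝ)) * z 0
      + (1 / (4 * (n : ℝ))) * ∑ i ∈ Finset.Icc 1 (32 * n - 16), z i := by
  rw [xx, _root_.inner_add_left, real_inner_smul_left, real_inner_smul_left, sum_inner]
  congr 2
  · rw [apply_eq_inner z 0, real_inner_comm]
  · exact Finset.sum_congr rfl fun i _ => by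
      rw [apply_eq_inner z i]

lemma xx_apply (n m : ℕ) :
    (xx n) m = (if m = 0 then 1 - 1 / (n : ℝ) else 0)
      + (if m ∈ Finset.Icc 1 (32 * n - 16) then 1 / (4 * (n : ℝ)) else 0) := by
  rw [apply_eq_inner, xx, _root_.inner_add_right, real_inner_smul_right,
    real_inner_smul_right, inner_sum]
  simp only [inner_e_e]
  rw [Finset.sum_ite_eq]
  congr 1
  · split_ifs with h
    · rw [mul_one]
    · rw [mul_zero]
  · split_ifs <;> simp

lemma card_Icc_xx (n : ℕ) (hn : 1 ≤ n) :
    ((Finset.Icc 1 (32 * n - 16)).card : ℝ) = 32 * (n : ℝ) - 16 := by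
  rw [Nat.card_Icc]
  have h16 : 16 ≤ 32 * n := by omega
  have : 32 * n - 16 + 1 - 1 = 32 * n - 16 := by omega
  rw [this, Nat.cast_sub h16]
  push_cast
  ring

lemma norm_xx (n : ℕ) (hn : 1 ≤ n) : ‖xx n‖ = 1 := by
  have hn' : (1 : ℝ) ≤ (n : ℝ) := by exact_mod_cast hn
  have h0 : (0:ℝ) < (n:ℝ) := by linarith
  have hsq : ‖xx n‖ ^ 2 = 1 := by
    rw [← real_inner_self_eq_norm_sq, inner_xx]
    have h00 : (xx n) 0 = 1 - 1 / (n : ℝ) := by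
      rw [xx_apply]; norm_num
    have hsum : ∑ i ∈ Finset.Icc 1 (32 * n - 16), (xx n) i
        = (32 * (n:ℝ) - 16) * (1 / (4 * (n:ℝ))) := by
      rw [Finset.sum_congr rfl (fun i hi => ?_), Finset.sum_const, nsmul_eq_mul,
        card_Icc_xx n hn]
      rw [xx_apply, if_pos hi, if_neg (by exact Nat.one_le_iff_ne_zero.mp (Finset.mem_Icc.mp hi).1)]
      ring
    rw [h00, hsum]
    field_simp
    ring
  nlinarith [norm_nonneg (xx n)]

/-! ### ballB facts -/

def genSet : Set H := Metric.closedBall (0 : H) 1 ∪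
    {z : H | ∃ n : ℕ, 1 ≤ n ∧ (z = e 0 + e n ∨ z = -(e 0 + e n))}

lemma ballB_eq : ballB = closure (convexHull ℝ genSet) := rfl

lemma norm_sq_e_add_e (m : ℕ) (hm : 1 ≤ m) : ‖e 0 + e m‖ ^ 2 = 2 := by
  have hm0 : m ≠ 0 := by omega
  rw [← real_inner_self_eq_norm_sq, _root_.inner_add_left, _root_.inner_add_right,
    _root_.inner_add_right, inner_e_e, inner_e_e, inner_e_e, inner_e_e]
  simp [hm0, Ne.symm hm0]
  norm_num

lemma genSet_subset_closedBall : genSet ⊆ Metric.closedBall (0 : H) (Real.sqrt 2) := by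
  have h2 : (0:ℝ) ≤ 2 := by norm_num
  rintro v (hv | ⟨m, hm, hv | hv⟩)
  · rw [Metric.mem_closedBall, dist_zero_right] at hv ⊢
    calc ‖v‖ ≤ 1 := hv
    _ ≤ Real.sqrt 2 := by
        nlinarith [Real.sq_sqrt h2, Real.sqrt_nonneg 2]
  · rw [mem_closedBall_zero_iff, hv]
    nlinarith [Real.sq_sqrt h2, Real.sqrt_nonneg 2, norm_nonneg (e 0 + e m),
      norm_sq_e_add_e m hm]
  · rw [mem_closedBall_zero_iff, hv, norm_neg]
    nlinarith [Real.sq_sqrt h2, Real.sqrt_nonneg 2, norm_nonneg (e 0 + e m),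
      norm_sq_e_add_e m hm]

lemma ballB_subset : ballB ⊆ Metric.closedBall (0 : H) (Real.sqrt 2) :=
  closure_minimal (convexHull_min genSet_subset_closedBall (convex_closedBall _ _))
    Metric.isClosed_closedBall

lemma norm_le_sqrt2_of_mem_ballB {y : H} (hy : y ∈ ballB) : ‖y‖ ≤ Real.sqrt 2 :=
  mem_closedBall_zero_iff.1 (ballB_subset hy)

lemma subset_ballB : Metric.closedBall (0 : H) 1 ⊆ ballB :=
  (Set.subset_union_left).trans ((subset_convexHull ℝ _).trans subset_closure)

lemma ballB_mem_nhds : ballB ∈ 𝓝 (0 : H) :=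
  Filter.mem_of_superset (Metric.closedBall_mem_nhds 0 one_pos) subset_ballB

lemma absorbent_ballB : Absorbent ℝ ballB := absorbent_nhds_zero ballB_mem_nhds

lemma convex_ballB : Convex ℝ ballB := (convex_convexHull ℝ _).closure

lemma isClosed_ballB : IsClosed ballB := isClosed_closure

lemma gaugeB_le_norm (z : H) : gauge ballB z ≤ ‖z‖ := by
  rcases eq_or_ne z 0 with rfl | hz
  · simp
  · apply gauge_le_of_mem (norm_nonneg z)
    refine Set.mem_smul_set.2 ⟨‖z‖⁻¹ • z, subset_ballB ?_, ?_⟩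
    · rw [mem_closedBall_zero_iff, norm_smul, norm_inv, norm_norm,
        inv_mul_cancel₀ (norm_ne_zero_iff.2 hz)]
    · rw [smul_smul, mul_inv_cancel₀ (norm_ne_zero_iff.2 hz), one_smul]

lemma norm_le_sqrt2_mul_gauge (z : H) : ‖z‖ ≤ Real.sqrt 2 * gauge ballB z := by
  by_contra hlt
  push_neg at hlt
  have hs2 : (0:ℝ) < Real.sqrt 2 := Real.sqrt_pos.2 (by norm_num)
  have hg : gauge ballB z < ‖z‖ / Real.sqrt 2 := by
    rw [lt_div_iff₀ hs2]
    linarith [hlt]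
  obtain ⟨b, hb0, hba, hmem⟩ := exists_lt_of_gauge_lt absorbent_ballB hg
  obtain ⟨w, hw, rfl⟩ := Set.mem_smul_set.1 hmem
  have hwn : ‖w‖ ≤ Real.sqrt 2 := norm_le_sqrt2_of_mem_ballB hw
  have : ‖b • w‖ ≤ b * Real.sqrt 2 := by
    rw [norm_smul, Real.norm_eq_abs, abs_of_pos hb0]
    exact mul_le_mul_of_nonneg_left hwn hb0.le
  have hbb : b * Real.sqrt 2 < ‖b • w‖ := by
    calc b * Real.sqrt 2 < (‖b • w‖ / Real.sqrt 2) * Real.sqrt 2 :=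
      mul_lt_mul_of_pos_right hba hs2
    _ = ‖b • w‖ := by field_simp
  linarith

lemma mem_ballB_of_gauge_le_one {y : H} (h : gauge ballB y ≤ 1) : y ∈ ballB := by
  have := (gauge_le_one_iff_mem_closure convex_ballB ballB_mem_nhds).1 h
  rwa [isClosed_ballB.closure_eq] at this

/-! ### The supremum term -/

def Tset (x : H) : Set ℝ := {r : ℝ | ∃ n : ℕ, 1 ≤ n ∧ r = |x 0 - 2 * x n|}

lemma tripleNorm_def (x : H) : tripleNorm x = max (gauge ballB x) (sSup (Tset x)) := rfl

lemma abs_term_le (x : H) (m : ℕ) : |x 0 - 2 * x m| ≤ 3 * ‖x‖ := by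
  have h0 : |x 0| ≤ ‖x‖ := by
    simpa [Real.norm_eq_abs] using
      lp.norm_apply_le_norm (by norm_num : (2 : ENNReal) ≠ 0) x 0
  have hmm : |x m| ≤ ‖x‖ := by
    simpa [Real.norm_eq_abs] using
      lp.norm_apply_le_norm (by norm_num : (2 : ENNReal) ≠ 0) x m
  have habs : |x 0 - 2 * x m| ≤ |x 0| + |2 * x m| := abs_sub _ _
  rw [abs_mul] at habs
  have : |(2:ℝ)| = 2 := by norm_num
  rw [this] at habs
  linarith

lemma Tset_bddAbove (x : H) : BddAbove (Tset x) := by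
  refine ⟨3 * ‖x‖, ?_⟩
  rintro r ⟨m, hm, rfl⟩
  exact abs_term_le x m

lemma le_Tset {x : H} {m : ℕ} (hm : 1 ≤ m) : |x 0 - 2 * x m| ≤ sSup (Tset x) :=
  le_csSup (Tset_bddAbove x) ⟨m, hm, rfl⟩

lemma Tset_sSup_le {x : H} {c : ℝ} (hc : 0 ≤ c)
    (h : ∀ m, 1 ≤ m → |x 0 - 2 * x m| ≤ c) : sSup (Tset x) ≤ c :=
  Real.sSup_le (by rintro r ⟨m, hm, rfl⟩; exact h m hm) hc

lemma Tset_sSup_nonneg (x : H) : 0 ≤ sSup (Tset x) :=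
  le_trans (abs_nonneg _) (le_Tset le_rfl)

lemma tripleNorm_nonneg (x : H) : 0 ≤ tripleNorm x :=
  le_trans (gauge_nonneg x) (le_max_left _ _)

lemma tripleNorm_le_three_norm (z : H) : tripleNorm z ≤ 3 * ‖z‖ := by
  rw [tripleNorm_def]
  refine max_le (le_trans (gaugeB_le_norm z) (by nlinarith [norm_nonneg z])) ?_
  exact Tset_sSup_le (by positivity) (fun m _ => abs_term_le z m)

/-! ### Consequences of `tripleNorm ≤ 1` -/

lemma gauge_le_tripleNorm (y : H) : gauge ballB y ≤ tripleNorm y := le_max_left _ _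

lemma sSup_Tset_le_tripleNorm (y : H) : sSup (Tset y) ≤ tripleNorm y := le_max_right _ _

lemma mem_ballB_of_tripleNorm_le_one {y : H} (h : tripleNorm y ≤ 1) : y ∈ ballB :=
  mem_ballB_of_gauge_le_one (le_trans (gauge_le_tripleNorm y) h)

lemma norm_le_sqrt2_of_tripleNorm_le_one {y : H} (h : tripleNorm y ≤ 1) :
    ‖y‖ ≤ Real.sqrt 2 :=
  norm_le_sqrt2_of_mem_ballB (mem_ballB_of_tripleNorm_le_one h)

lemma sqrt2_le_two : Real.sqrt 2 ≤ 2 := by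
  nlinarith [Real.sq_sqrt (by norm_num : (0:ℝ) ≤ 2), Real.sqrt_nonneg 2]

lemma smul_apply' (c : ℝ) (w : H) (i : ℕ) : (c • w : H) i = c * w i := by
  rw [lp.coeFn_smul, Pi.smul_apply, smul_eq_mul]

lemma sub_apply' (v w : H) (i : ℕ) : (v - w : H) i = v i - w i := by
  rw [lp.coeFn_sub, Pi.sub_apply]

/-- Pairing against an element of the dual unit ball is dominated by the triple norm. -/
lemma dual_pair_le {h : H} (hd : dualTripleNorm h ≤ 1) (w : H) : ⟪h, w⟫ ≤ tripleNorm w := by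
  have hball : ∀ z : H, tripleNorm z ≤ 1 → ⟪h, z⟫ ≤ 1 := by
    intro z hz
    have hbdd : BddAbove ((fun y => pairing h y) '' {y : H | tripleNorm y ≤ 1}) := by
      refine ⟨‖h‖ * Real.sqrt 2, ?_⟩
      rintro r ⟨y, hy, rfl⟩
      calc pairing h y = ⟪h, y⟫ := pairing_eq_inner h y
      _ ≤ ‖h‖ * ‖y‖ := real_inner_le_norm h y
      _ ≤ ‖h‖ * Real.sqrt 2 :=
          mul_le_mul_of_nonneg_left (norm_le_sqrt2_of_tripleNorm_le_one hy) (norm_nonneg h)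
    have h1 : pairing h z ≤ dualTripleNorm h := le_csSup hbdd ⟨z, hz, rfl⟩
    rw [pairing_eq_inner] at h1
    exact le_trans h1 hd
  set M := tripleNorm w with hM
  rcases lt_or_ge 0 M with hM0 | hM0
  · have hz : tripleNorm (M⁻¹ • w) ≤ 1 := by
      rw [tripleNorm_def]
      refine max_le ?_ ?_
      · rw [gauge_smul_of_nonneg (inv_nonneg.2 hM0.le), smul_eq_mul]
        calc M⁻¹ * gauge ballB w ≤ M⁻¹ * M :=
          mul_le_mul_of_nonneg_left (gauge_le_tripleNorm w) (inv_nonneg.2 hM0.le)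
        _ = 1 := inv_mul_cancel₀ hM0.ne'
      · refine Tset_sSup_le zero_le_one (fun m hm => ?_)
        rw [smul_apply', smul_apply']
        have : M⁻¹ * w 0 - 2 * (M⁻¹ * w m) = M⁻¹ * (w 0 - 2 * w m) := by ring
        rw [this, abs_mul, abs_of_nonneg (inv_nonneg.2 hM0.le)]
        calc M⁻¹ * |w 0 - 2 * w m| ≤ M⁻¹ * M := by
              refine mul_le_mul_of_nonneg_left ?_ (inv_nonneg.2 hM0.le)
              exact le_trans (le_Tset hm) (sSup_Tset_le_tripleNorm w)
        _ = 1 := inv_mul_cancel₀ hM0.ne'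
    have h1 := hball _ hz
    rw [real_inner_smul_right] at h1
    calc ⟪h, w⟫ = M * (M⁻¹ * ⟪h, w⟫) := by field_simp
    _ ≤ M * 1 := mul_le_mul_of_nonneg_left h1 hM0.le
    _ = M := mul_one M
  · have hM00 : M = 0 := le_antisymm hM0 (tripleNorm_nonneg w)
    have hg : gauge ballB w = 0 :=
      le_antisymm (le_trans (gauge_le_tripleNorm w) (by rw [← hM, hM00])) (gauge_nonneg w)
    have hnw : ‖w‖ ≤ 0 := by
      have := norm_le_sqrt2_mul_gauge w
      rw [hg, mul_zero] at this
      exact this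
    have hw0 : w = 0 := norm_le_zero_iff.1 hnw
    rw [hw0, inner_zero_right, hM00]

/-! ### coordinates of `xx n` -/

lemma xx_apply_zero (n : ℕ) : (xx n) 0 = 1 - 1 / (n : ℝ) := by
  rw [xx_apply]; norm_num

lemma xx_apply_pos (n m : ℕ) (hm : 1 ≤ m) :
    (xx n) m = if m ∈ Finset.Icc 1 (32 * n - 16) then 1 / (4 * (n : ℝ)) else 0 := by
  rw [xx_apply, if_neg (by omega : ¬ m = 0), zero_add]

lemma inner_xx_e_add_e (n m : ℕ) : ⟪xx n, e 0 + e m⟫ = (xx n) 0 + (xx n) m := by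
  rw [_root_.inner_add_right]
  congr 1
  · rw [apply_eq_inner (xx n) 0]; exact real_inner_comm _ _
  · rw [apply_eq_inner (xx n) m]; exact real_inner_comm _ _

/-! ### Key inequality for part 1 -/

set_option maxHeartbeats 1000000 in
lemma key1 (n : ℕ) (hn : 1 ≤ n) {y : H} (hy : y ∈ ballB) :
    ⟪xx n, y⟫ + (1 / (4 * (n : ℝ))) * ‖xx n - y‖ ^ 2 ≤ 1 := by
  have hn' : (1 : ℝ) ≤ (n : ℝ) := by exact_mod_cast hn
  have hnpos : (0 : ℝ) < (n : ℝ) := by linarith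
  have hc0 : 0 < 1 / (4 * (n : ℝ)) := by positivity
  have hc14 : 1 / (4 * (n : ℝ)) ≤ 1 / 4 := by
    rw [div_le_div_iff₀ (by positivity) (by norm_num)]
    linarith
  have h4c : 1 / (n : ℝ) = 4 * (1 / (4 * (n : ℝ))) := by field_simp
  have hu1 : 1 / (n : ℝ) ≤ 1 := by rw [div_le_one hnpos]; linarith
  set c : ℝ := 1 / (4 * (n : ℝ)) with hc
  have hconv : Convex ℝ {z : H | (1 - 2 * c) * ⟪xx n, z⟫ + c * ‖z‖ ^ 2 ≤ 1 - c} := by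
    intro u hu v hv a b ha hb hab
    simp only [Set.mem_setOf_eq] at hu hv ⊢
    have hnorm : ‖a • u + b • v‖ ≤ a * ‖u‖ + b * ‖v‖ := by
      calc ‖a • u + b • v‖ ≤ ‖a • u‖ + ‖b • v‖ := norm_add_le _ _
      _ = a * ‖u‖ + b * ‖v‖ := by
          rw [norm_smul, norm_smul, Real.norm_eq_abs, Real.norm_eq_abs,
            abs_of_nonneg ha, abs_of_nonneg hb]
    have hsq : ‖a • u + b • v‖ ^ 2 ≤ a * ‖u‖ ^ 2 + b * ‖v‖ ^ 2 := by
      nlinarith [sq_nonneg (‖u‖ - ‖v‖), norm_nonneg u, norm_nonneg v,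
        norm_nonneg (a • u + b • v), mul_nonneg ha hb]
    have hinner : ⟪xx n, a • u + b • v⟫ = a * ⟪xx n, u⟫ + b * ⟪xx n, v⟫ := by
      rw [_root_.inner_add_right, real_inner_smul_right, real_inner_smul_right]
    have h2c : (0 : ℝ) ≤ 1 - 2 * c := by linarith
    rw [hinner]
    nlinarith [mul_le_mul_of_nonneg_left hu ha, mul_le_mul_of_nonneg_left hv hb,
      mul_le_mul_of_nonneg_left hsq hc0.le]
  have hclosed : IsClosed {z : H | (1 - 2 * c) * ⟪xx n, z⟫ + c * ‖z‖ ^ 2 ≤ 1 - c} := by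
    have h1 : Continuous fun z : H => ⟪xx n, z⟫ := continuous_const.inner continuous_id
    exact isClosed_le
      ((continuous_const.mul h1).add (continuous_const.mul (continuous_norm.pow 2)))
      continuous_const
  have haux : ∀ m : ℕ, 1 ≤ m →
      0 ≤ (xx n) 0 + (xx n) m ∧ (xx n) 0 + (xx n) m ≤ 1 - 3 * c := by
    intro m hm
    rw [xx_apply_zero, xx_apply_pos n m hm]
    split_ifs
    · exact ⟨by linarith, by linarith⟩
    · exact ⟨by linarith, by linarith⟩
  have hsubset : genSet ⊆ {z : H | (1 - 2 * c) * ⟪xx n, z⟫ + c * ‖z‖ ^ 2 ≤ 1 - c} := by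
    have hxnorm : ‖xx n‖ = 1 := norm_xx n hn
    rintro v (hv | ⟨m, hm, hv | hv⟩) <;> simp only [Set.mem_setOf_eq]
    · have h2 : ‖v‖ ≤ 1 := mem_closedBall_zero_iff.1 hv
      have h1 : ⟪xx n, v⟫ ≤ 1 := by
        calc ⟪xx n, v⟫ ≤ ‖xx n‖ * ‖v‖ := real_inner_le_norm _ _
        _ ≤ 1 := by rw [hxnorm, one_mul]; exact h2
      have h2c : (0 : ℝ) ≤ 1 - 2 * c := by linarith
      have hB : ‖v‖ ^ 2 ≤ 1 := by nlinarith [norm_nonneg v]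
      have hA := mul_le_mul_of_nonneg_left h1 h2c
      have hC := mul_le_mul_of_nonneg_left hB hc0.le
      linarith
    · obtain ⟨ha0, ha1⟩ := haux m hm
      have hiv : ⟪xx n, v⟫ = (xx n) 0 + (xx n) m := by
        rw [hv]; exact inner_xx_e_add_e n m
      have hnv : ‖v‖ ^ 2 = 2 := by rw [hv]; exact norm_sq_e_add_e m hm
      rw [hiv, hnv]
      nlinarith [ha0, ha1]
    · obtain ⟨ha0, ha1⟩ := haux m hm
      have hiv : ⟪xx n, v⟫ = -((xx n) 0 + (xx n) m) := by
        rw [hv, inner_neg_right, inner_xx_e_add_e n m]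
      have hnv : ‖v‖ ^ 2 = 2 := by rw [hv, norm_neg]; exact norm_sq_e_add_e m hm
      rw [hiv, hnv]
      nlinarith [ha0, ha1]
  have hmem : y ∈ {z : H | (1 - 2 * c) * ⟪xx n, z⟫ + c * ‖z‖ ^ 2 ≤ 1 - c} :=
    closure_minimal (convexHull_min hsubset hconv) hclosed hy
  simp only [Set.mem_setOf_eq] at hmem
  have hexp : ‖xx n - y‖ ^ 2 = 1 - 2 * ⟪xx n, y⟫ + ‖y‖ ^ 2 := by
    rw [norm_sub_sq_real, norm_xx n hn]; ring
  rw [hexp]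
  linarith

/-! ### Key inequality for part 2 -/

set_option maxHeartbeats 1000000 in
lemma key2 (n : ℕ) (hn : 1 ≤ n) {y : H} (hy : tripleNorm y ≤ 1) {t : ℝ}
    (ht0 : 0 ≤ t) (ht : t ≤ 1 / (8 * (n : ℝ))) :
    tripleNorm (xx n - t • y) ≤ 1 - t * ⟪xx n, y⟫ + t ^ 2 := by
  have hn' : (1 : ℝ) ≤ (n : ℝ) := by exact_mod_cast hn
  have hnpos : (0 : ℝ) < (n : ℝ) := by linarith
  have hyn : ‖y‖ ≤ Real.sqrt 2 := norm_le_sqrt2_of_tripleNorm_le_one hy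
  have hb : ‖y‖ ^ 2 ≤ 2 := by
    nlinarith [Real.sq_sqrt (by norm_num : (0:ℝ) ≤ 2), Real.sqrt_nonneg 2, norm_nonneg y]
  have ha : |⟪xx n, y⟫| ≤ 2 := by
    calc |⟪xx n, y⟫| ≤ ‖xx n‖ * ‖y‖ := abs_real_inner_le_norm _ _
    _ = ‖y‖ := by rw [norm_xx n hn, one_mul]
    _ ≤ 2 := le_trans hyn sqrt2_le_two
  have ht1 : t ≤ 1 / 8 := by
    refine le_trans ht ?_
    rw [div_le_div_iff₀ (by positivity) (by norm_num)]
    linarith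
  obtain ⟨haL, haR⟩ := abs_le.1 ha
  have htiv : t * ⟪xx n, y⟫ ≤ 2 * t := by
    have := mul_le_mul_of_nonneg_left haR ht0
    linarith
  have htivL : -(2 * t) ≤ t * ⟪xx n, y⟫ := by
    have := mul_le_mul_of_nonneg_left haL ht0
    linarith
  have hr : (0 : ℝ) ≤ 1 - t * ⟪xx n, y⟫ + t ^ 2 := by nlinarith [sq_nonneg t]
  rw [tripleNorm_def]
  refine max_le ?_ ?_
  · refine le_trans (gaugeB_le_norm _) ?_
    have hsq : ‖xx n - t • y‖ ^ 2 = 1 - 2 * t * ⟪xx n, y⟫ + t ^ 2 * ‖y‖ ^ 2 := by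
      rw [norm_sub_sq_real, norm_xx n hn, real_inner_smul_right, norm_smul,
        Real.norm_eq_abs, abs_of_nonneg ht0]
      ring
    nlinarith [hsq, hr, norm_nonneg (xx n - t • y),
      mul_nonneg (sq_nonneg t) (sq_nonneg (⟪xx n, y⟫ - t)),
      mul_nonneg (sq_nonneg t) (show (0:ℝ) ≤ 2 - ‖y‖ ^ 2 by linarith)]
  · refine Tset_sSup_le (by linarith) (fun m hm => ?_)
    have hco : ∀ i : ℕ, (xx n - t • y : H) i = (xx n) i - t * y i := fun i => by
      rw [sub_apply', smul_apply']
    have hxbound : |(xx n) 0 - 2 * (xx n) m| ≤ 1 - 1 / (2 * (n : ℝ)) := by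
      rw [xx_apply_zero, xx_apply_pos n m hm]
      have hu1 : 1 / (n : ℝ) ≤ 1 := by rw [div_le_one hnpos]; linarith
      have hu0 : 0 < 1 / (n : ℝ) := by positivity
      have h24 : 2 * (1 / (4 * (n : ℝ))) = (1 / (n : ℝ)) / 2 := by
        field_simp
        ring
      have h2n : 1 / (2 * (n : ℝ)) = (1 / (n : ℝ)) / 2 := by
        field_simp
      split_ifs
      · refine abs_le.2 ⟨by linarith, by linarith⟩
      · rw [mul_zero, sub_zero]
        refine abs_le.2 ⟨by linarith, by linarith⟩
    have hybound : |y 0 - 2 * y m| ≤ 1 :=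
      le_trans (le_Tset hm) (le_trans (sSup_Tset_le_tripleNorm y) hy)
    have heq : (xx n - t • y : H) 0 - 2 * (xx n - t • y : H) m
        = ((xx n) 0 - 2 * (xx n) m) - t * (y 0 - 2 * y m) := by
      rw [hco 0, hco m]; ring
    have h48 : 4 * (1 / (8 * (n : ℝ))) = 1 / (2 * (n : ℝ)) := by
      field_simp
      ring
    calc |(xx n - t • y : H) 0 - 2 * (xx n - t • y : H) m|
        ≤ |(xx n) 0 - 2 * (xx n) m| + t * |y 0 - 2 * y m| := by
          rw [heq]
          refine le_trans (abs_sub _ _) ?_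
          rw [abs_mul, abs_of_nonneg ht0]
      _ ≤ (1 - 1 / (2 * (n : ℝ))) + t := by
          have := mul_le_mul_of_nonneg_left hybound ht0
          linarith [hxbound]
      _ ≤ 1 - t * ⟪xx n, y⟫ + t ^ 2 := by
          nlinarith [sq_nonneg t, htivL, ht, ht0, h48]

lemma xs_eq (n : ℕ) : xs n = xx n := rfl

/-- For each fixed `n ≥ 1`, the point `x(n)` is strongly exposed in `B_Y` by the
functional `x*(n)`, and `x*(n)` is strongly exposed in `B_{Y*}` by `x(n)`. -/
theorem xx_stronglyExposed_by_xs (n : ℕ) (hn : 1 ≤ n) :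
    (∀ ε : ℝ, 0 < ε → ∃ δ : ℝ, 0 < δ ∧
      ∀ y : H, tripleNorm y ≤ 1 → 1 - δ < pairing (xs n) y →
        tripleNorm (xx n - y) < ε) ∧
    (∀ ε : ℝ, 0 < ε → ∃ δ : ℝ, 0 < δ ∧
      ∀ h : H, dualTripleNorm h ≤ 1 → 1 - δ < pairing h (xx n) →
        dualTripleNorm (xs n - h) < ε) := by
  have hn' : (1 : ℝ) ≤ (n : ℝ) := by exact_mod_cast hn
  have hnpos : (0 : ℝ) < (n : ℝ) := by linarith
  constructor
  · intro ε hε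
    refine ⟨ε ^ 2 / (72 * (n : ℝ)), by positivity, fun y hy hpy => ?_⟩
    rw [xs_eq, pairing_eq_inner] at hpy
    have hyB : y ∈ ballB := mem_ballB_of_tripleNorm_le_one hy
    have hkey := key1 n hn hyB
    have h1 : (1 / (4 * (n : ℝ))) * ‖xx n - y‖ ^ 2 < ε ^ 2 / (72 * (n : ℝ)) := by
      linarith
    have hsq2 : ‖xx n - y‖ ^ 2 < ε ^ 2 / 18 := by
      have e1 : ‖xx n - y‖ ^ 2
          = 4 * (n : ℝ) * ((1 / (4 * (n : ℝ))) * ‖xx n - y‖ ^ 2) := by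
        field_simp
      have e2 : 4 * (n : ℝ) * (ε ^ 2 / (72 * (n : ℝ))) = ε ^ 2 / 18 := by
        field_simp
        ring
      calc ‖xx n - y‖ ^ 2
          = 4 * (n : ℝ) * ((1 / (4 * (n : ℝ))) * ‖xx n - y‖ ^ 2) := e1
        _ < 4 * (n : ℝ) * (ε ^ 2 / (72 * (n : ℝ))) :=
            mul_lt_mul_of_pos_left h1 (by positivity)
        _ = ε ^ 2 / 18 := e2
    calc tripleNorm (xx n - y) ≤ 3 * ‖xx n - y‖ := tripleNorm_le_three_norm _
    _ < ε := by nlinarith [norm_nonneg (xx n - y), hε]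
  · intro ε hε
    set t : ℝ := min (1 / (8 * (n : ℝ))) (ε / 4) with htdef
    have ht0 : 0 < t := lt_min (by positivity) (by positivity)
    refine ⟨t ^ 2, by positivity, fun h hd hph => ?_⟩
    rw [pairing_eq_inner] at hph
    have hbound : ∀ z : H, tripleNorm z ≤ 1 → ⟪xx n - h, z⟫ ≤ 2 * t := by
      intro z hz
      have hsm := key2 n hn hz ht0.le (min_le_left _ _)
      have hdp := dual_pair_le hd (xx n - t • z)
      have hexp : ⟪h, xx n - t • z⟫ = ⟪h, xx n⟫ - t * ⟪h, z⟫ := by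
        rw [inner_sub_right, real_inner_smul_right]
      rw [hexp] at hdp
      have h1 : 1 - t ^ 2 - t * ⟪h, z⟫ < 1 - t * ⟪xx n, z⟫ + t ^ 2 := by
        calc 1 - t ^ 2 - t * ⟪h, z⟫ < ⟪h, xx n⟫ - t * ⟪h, z⟫ := by linarith
        _ ≤ tripleNorm (xx n - t • z) := hdp
        _ ≤ 1 - t * ⟪xx n, z⟫ + t ^ 2 := hsm
      have h2 : t * ⟪xx n, z⟫ - t * ⟪h, z⟫ < 2 * t ^ 2 := by linarith
      have h3 : ⟪xx n - h, z⟫ = ⟪xx n, z⟫ - ⟪h, z⟫ := inner_sub_left _ _ _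
      rw [h3]
      nlinarith [h2, ht0]
    rw [xs_eq]
    have hle : dualTripleNorm (xx n - h) ≤ 2 * t := by
      refine Real.sSup_le ?_ (by positivity)
      rintro r ⟨z, hz, rfl⟩
      show pairing (xx n - h) z ≤ 2 * t
      rw [pairing_eq_inner]
      exact hbound z hz
    have htr : t ≤ ε / 4 := min_le_right _ _
    linarith


end
end

section
/- Let (M, d) be a metric space and α ∈ (0,1), and let b_α be as defined in the context. Then two points x, y ∈ M are discretely connectable if and only if b_α(x,y) = (1−α)·d(x,y). -/
open Metric

/-- The modified distance `w_{α,ε}`: equal to `d(x,y)` if `d(x,y) ≥ ε` and to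
`(1−α)·d(x,y)` if `d(x,y) < ε`. -/
noncomputable def wFun (M : Type*) [MetricSpace M] (α ε : ℝ) (x y : M) : ℝ :=
  if dist x y < ε then (1 - α) * dist x y else dist x y

/-- The metric `b_{α,ε}`: the infimum of `Σ_i w_{α,ε}(p_i, p_{i+1})` over all finite
chains from `x` to `y`. -/
noncomputable def bFunEps (M : Type*) [MetricSpace M] (α ε : ℝ) (x y : M) : ℝ :=
  sInf { r : ℝ | ∃ (n : ℕ) (p : ℕ → M), p 0 = x ∧ p (n + 1) = y ∧
    r = ∑ i ∈ Finset.range (n + 1), wFun M α ε (p i) (p (i + 1)) }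

/-- The metric `b_α = sup_{ε > 0} b_{α,ε}`. -/
noncomputable def bFun (M : Type*) [MetricSpace M] (α : ℝ) (x y : M) : ℝ :=
  sSup { r : ℝ | ∃ ε : ℝ, 0 < ε ∧ r = bFunEps M α ε x y }

/-- `x` and `y` are ε-discretely connectable in `M`. -/
def EpsDiscretelyConnectable (M : Type*) [MetricSpace M] (ε : ℝ) (x y : M) : Prop :=
  ∃ (n : ℕ) (p : ℕ → M), p 0 = x ∧ p (n + 1) = y ∧
    (∀ i ≤ n, dist (p i) (p (i + 1)) < ε) ∧
    (∑ i ∈ Finset.range (n + 1), dist (p i) (p (i + 1))) < dist x y + ε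

/-- `x` and `y` are discretely connectable if they are ε-discretely connectable for
every `ε > 0`. -/
def DiscretelyConnectable (M : Type*) [MetricSpace M] (x y : M) : Prop :=
  ∀ ε : ℝ, 0 < ε → EpsDiscretelyConnectable M ε x y

section Aux

variable {M : Type*} [MetricSpace M]

/-- The set of chain sums defining `bFunEps`. -/
def chainSet (M : Type*) [MetricSpace M] (α ε : ℝ) (x y : M) : Set ℝ :=
  { r : ℝ | ∃ (n : ℕ) (p : ℕ → M), p 0 = x ∧ p (n + 1) = y ∧
    r = ∑ i ∈ Finset.range (n + 1), wFun M α ε (p i) (p (i + 1)) }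

lemma bFunEps_eq (α ε : ℝ) (x y : M) :
    bFunEps M α ε x y = sInf (chainSet M α ε x y) := rfl

lemma wFun_le_dist {α : ℝ} (hα : 0 < α) (ε : ℝ) (x y : M) :
    wFun M α ε x y ≤ dist x y := by
  unfold wFun
  split
  · nlinarith [dist_nonneg (x := x) (y := y)]
  · exact le_rfl

lemma le_wFun {α : ℝ} (hα : 0 < α) (ε : ℝ) (x y : M) :
    (1 - α) * dist x y ≤ wFun M α ε x y := by
  unfold wFun
  split
  · exact le_rfl
  · nlinarith [dist_nonneg (x := x) (y := y)]

lemma mem_chainSet (α ε : ℝ) (x y : M) :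
    wFun M α ε x y ∈ chainSet M α ε x y := by
  exact ⟨0, fun i => if i = 0 then x else y, by simp, by simp, by simp⟩

lemma chainSet_nonempty (α ε : ℝ) (x y : M) : (chainSet M α ε x y).Nonempty :=
  ⟨_, mem_chainSet α ε x y⟩

lemma chainSet_lb {α : ℝ} (hα : 0 < α) (hα1 : α < 1) (ε : ℝ) (x y : M)
    {r : ℝ} (hr : r ∈ chainSet M α ε x y) : (1 - α) * dist x y ≤ r := by
  obtain ⟨n, p, hp0, hp1, rfl⟩ := hr
  calc (1 - α) * dist x y = (1 - α) * dist (p 0) (p (n + 1)) := by rw [hp0, hp1]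
    _ ≤ (1 - α) * ∑ i ∈ Finset.range (n + 1), dist (p i) (p (i + 1)) := by
        apply mul_le_mul_of_nonneg_left (dist_le_range_sum_dist p (n + 1)) (by linarith)
    _ = ∑ i ∈ Finset.range (n + 1), (1 - α) * dist (p i) (p (i + 1)) :=
        Finset.mul_sum _ _ _
    _ ≤ ∑ i ∈ Finset.range (n + 1), wFun M α ε (p i) (p (i + 1)) :=
        Finset.sum_le_sum fun i _ => le_wFun hα ε _ _

lemma chainSet_bddBelow {α : ℝ} (hα : 0 < α) (hα1 : α < 1) (ε : ℝ) (x y : M) :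
    BddBelow (chainSet M α ε x y) :=
  ⟨(1 - α) * dist x y, fun _ hr => chainSet_lb hα hα1 ε x y hr⟩

lemma le_bFunEps {α : ℝ} (hα : 0 < α) (hα1 : α < 1) (ε : ℝ) (x y : M) :
    (1 - α) * dist x y ≤ bFunEps M α ε x y := by
  rw [bFunEps_eq]
  exact le_csInf (chainSet_nonempty α ε x y) fun _ hr => chainSet_lb hα hα1 ε x y hr

lemma bFunEps_le_dist {α : ℝ} (hα : 0 < α) (hα1 : α < 1) (ε : ℝ) (x y : M) :
    bFunEps M α ε x y ≤ dist x y := by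
  rw [bFunEps_eq]
  exact le_trans (csInf_le (chainSet_bddBelow hα hα1 ε x y) (mem_chainSet α ε x y))
    (wFun_le_dist hα ε x y)

lemma bFunSet_nonempty (α : ℝ) (x y : M) :
    ({ r : ℝ | ∃ ε : ℝ, 0 < ε ∧ r = bFunEps M α ε x y } : Set ℝ).Nonempty :=
  ⟨bFunEps M α 1 x y, 1, one_pos, rfl⟩

lemma bFunSet_bddAbove {α : ℝ} (hα : 0 < α) (hα1 : α < 1) (x y : M) :
    BddAbove { r : ℝ | ∃ ε : ℝ, 0 < ε ∧ r = bFunEps M α ε x y } := by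
  refine ⟨dist x y, ?_⟩
  rintro r ⟨ε, hε, rfl⟩
  exact bFunEps_le_dist hα hα1 ε x y

lemma bFunEps_le_bFun {α : ℝ} (hα : 0 < α) (hα1 : α < 1) {ε : ℝ} (hε : 0 < ε) (x y : M) :
    bFunEps M α ε x y ≤ bFun M α x y :=
  le_csSup (bFunSet_bddAbove hα hα1 x y) ⟨ε, hε, rfl⟩

end Aux

/-- For `α ∈ (0,1)`, two points `x, y` of a metric space `M` are discretely connectable
if and only if `b_α(x,y) = (1−α)·d(x,y)`. -/
theorem discretelyConnectable_iff_bFun_eq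
    (M : Type*) [MetricSpace M] (α : ℝ) (hα : α ∈ Set.Ioo (0 : ℝ) 1) (x y : M) :
    DiscretelyConnectable M x y ↔ bFun M α x y = (1 - α) * dist x y := by
  obtain ⟨hα0, hα1⟩ := hα
  constructor
  · intro hDC
    apply le_antisymm
    · -- bFun ≤ (1-α) d
      apply csSup_le (bFunSet_nonempty α x y)
      rintro r ⟨ε, hε, rfl⟩
      apply le_of_forall_pos_le_add
      intro δ hδ
      set ε'' := min ε δ with hε''def
      have hε'' : 0 < ε'' := lt_min hε hδ
      obtain ⟨n, p, hp0, hp1, hsteps, hsum⟩ := hDC ε'' hε''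
      have hmem : (∑ i ∈ Finset.range (n + 1), wFun M α ε (p i) (p (i + 1)))
          ∈ chainSet M α ε x y := ⟨n, p, hp0, hp1, rfl⟩
      have heq : ∀ i ∈ Finset.range (n + 1),
          wFun M α ε (p i) (p (i + 1)) = (1 - α) * dist (p i) (p (i + 1)) := by
        intro i hi
        have hi' : i ≤ n := Nat.lt_succ_iff.mp (Finset.mem_range.mp hi)
        have : dist (p i) (p (i + 1)) < ε :=
          lt_of_lt_of_le (hsteps i hi') (min_le_left _ _)
        simp [wFun, this]
      have h1 : bFunEps M α ε x y ≤
          ∑ i ∈ Finset.range (n + 1), wFun M α ε (p i) (p (i + 1)) := by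
        rw [bFunEps_eq]
        exact csInf_le (chainSet_bddBelow hα0 hα1 ε x y) hmem
      have h2 : (∑ i ∈ Finset.range (n + 1), wFun M α ε (p i) (p (i + 1)))
          = (1 - α) * ∑ i ∈ Finset.range (n + 1), dist (p i) (p (i + 1)) := by
        rw [Finset.sum_congr rfl heq, Finset.mul_sum]
      have h3 : (1 - α) * (∑ i ∈ Finset.range (n + 1), dist (p i) (p (i + 1)))
          ≤ (1 - α) * (dist x y + ε'') :=
        mul_le_mul_of_nonneg_left hsum.le (by linarith)
      have h4 : ε'' ≤ δ := min_le_right _ _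
      nlinarith [h1, h2, h3]
    · -- (1-α) d ≤ bFun
      exact le_trans (le_bFunEps hα0 hα1 1 x y) (bFunEps_le_bFun hα0 hα1 one_pos x y)
  · intro hb ε hε
    set δ : ℝ := min (α * ε) ((1 - α) * ε) / 2 with hδdef
    have hδ : 0 < δ := by
      apply div_pos _ two_pos
      exact lt_min (by positivity) (by nlinarith)
    have hδ1 : δ ≤ α * ε / 2 := by
      apply div_le_div_of_nonneg_right (min_le_left _ _) (by norm_num : (0:ℝ) ≤ 2)
    have hδ2 : δ ≤ (1 - α) * ε / 2 := by
      apply div_le_div_of_nonneg_right (min_le_right _ _) (by norm_num : (0:ℝ) ≤ 2)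
    have hlt : sInf (chainSet M α ε x y) < (1 - α) * dist x y + δ := by
      rw [← bFunEps_eq]
      calc bFunEps M α ε x y ≤ bFun M α x y := bFunEps_le_bFun hα0 hα1 hε x y
        _ = (1 - α) * dist x y := hb
        _ < (1 - α) * dist x y + δ := by linarith
    obtain ⟨r, hrmem, hrlt⟩ := exists_lt_of_csInf_lt (chainSet_nonempty α ε x y) hlt
    obtain ⟨n, p, hp0, hp1, rfl⟩ := hrmem
    refine ⟨n, p, hp0, hp1, ?_, ?_⟩
    · -- each step < ε
      intro i hi
      by_contra hcon
      push_neg at hcon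
      have hi' : i ∈ Finset.range (n + 1) := Finset.mem_range.mpr (Nat.lt_succ_of_le hi)
      have hw : wFun M α ε (p i) (p (i + 1)) = dist (p i) (p (i + 1)) := by
        simp [wFun, not_lt.mpr hcon]
      have hsingle : wFun M α ε (p i) (p (i + 1)) - (1 - α) * dist (p i) (p (i + 1))
          ≤ ∑ j ∈ Finset.range (n + 1),
            (wFun M α ε (p j) (p (j + 1)) - (1 - α) * dist (p j) (p (j + 1))) := by
        apply Finset.single_le_sum (f := fun j =>
          wFun M α ε (p j) (p (j + 1)) - (1 - α) * dist (p j) (p (j + 1))) _ hi'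
        intro j _
        have := le_wFun (ε := ε) hα0 (p j) (p (j + 1))
        linarith
      have hsumsplit : ∑ j ∈ Finset.range (n + 1),
          (wFun M α ε (p j) (p (j + 1)) - (1 - α) * dist (p j) (p (j + 1)))
          = (∑ j ∈ Finset.range (n + 1), wFun M α ε (p j) (p (j + 1)))
            - (1 - α) * ∑ j ∈ Finset.range (n + 1), dist (p j) (p (j + 1)) := by
        rw [Finset.sum_sub_distrib, Finset.mul_sum]
      have hdl : (1 - α) * dist x y ≤
          (1 - α) * ∑ j ∈ Finset.range (n + 1), dist (p j) (p (j + 1)) := by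
        apply mul_le_mul_of_nonneg_left _ (by linarith)
        rw [← hp0, ← hp1]
        exact dist_le_range_sum_dist p (n + 1)
      have hkey : α * ε ≤ α * dist (p i) (p (i + 1)) :=
        mul_le_mul_of_nonneg_left hcon hα0.le
      rw [hw] at hsingle
      rw [hsumsplit] at hsingle
      nlinarith [hsingle, hrlt, hdl, hkey]
    · -- total sum < dist x y + ε
      have hlb : (1 - α) * ∑ j ∈ Finset.range (n + 1), dist (p j) (p (j + 1))
          ≤ ∑ j ∈ Finset.range (n + 1), wFun M α ε (p j) (p (j + 1)) := by
        rw [Finset.mul_sum]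
        exact Finset.sum_le_sum fun j _ => le_wFun hα0 ε _ _
      have h1α : (0:ℝ) < 1 - α := by linarith
      nlinarith [hlb, hrlt, hδ2]
end
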